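/- Let n ≥ 1, let χ : Fin (n+1) → ℕ be a weight vector, and let χ' = (χ_0, …, χ_{n-1}). The subspace C = {[z]_χ ∈ P(χ) : |z_n|² ≥ 1/2} of P(χ) (this condition is independent of the chosen representative z ∈ S^{2n+1}) is homeomorphic to the cone on the weighted lens space L(χ_n; χ'), i.e. to the quotient (L(χ_n;χ') × [0,1]) / (L(χ_n;χ') × {0}). -/

import Mathlib

noncomputable section

/-- The unit sphere in `ℂ^m` (the sphere `S^{2m-1}`). -/
abbrev Sph (m : ℕ) : Type := {z : Fin m → ℂ // ∑ i, ‖z i‖ ^ 2 = 1}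

/-- The relation on the sphere whose quotient is the weighted projective space `P(χ)`:
`z ∼ w` iff `w = t ·_χ z` for some unimodular `t`. -/
def wRel (m : ℕ) (χ : Fin m → ℕ) (z w : Sph m) : Prop :=
  ∃ t : ℂ, ‖t‖ = 1 ∧ ∀ i, (w : Fin m → ℂ) i = t ^ χ i * (z : Fin m → ℂ) i

/-- The weighted projective space `P(χ)`, with the quotient topology. -/
abbrev WP (m : ℕ) (χ : Fin m → ℕ) : Type := Quot (wRel m χ)

/-- The class `[z]_χ` of a point of the sphere in `P(χ)`. -/
def wpMk (m : ℕ) (χ : Fin m → ℕ) (z : Sph m) : WP m χ := Quot.mk _ z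

/-- `s(χ,ω)`: the least positive integer `s` with `ω i ∣ s * χ i` for all `i`. -/
def sVal (m : ℕ) (χ ω : Fin m → ℕ) : ℕ := sInf {s : ℕ | 0 < s ∧ ∀ i, ω i ∣ s * χ i}

/-- The exponents `d i = s(χ,ω)·χ i/ω i` of the map `e(χ/ω)`. -/
def dExp (m : ℕ) (χ ω : Fin m → ℕ) (i : Fin m) : ℕ := sVal m χ ω * χ i / ω i

/-- `IsNorm m χ v w` says that `w` is the normalisation `N_χ(v)`, i.e. `w` lies on the
sphere and has the form `(λ^{χ_0} v_0, …)` for some real `λ > 0`. -/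
def IsNorm (m : ℕ) (χ : Fin m → ℕ) (v : Fin m → ℂ) (w : Sph m) : Prop :=
  ∃ l : ℝ, 0 < l ∧ ∀ i, (w : Fin m → ℂ) i = (l : ℂ) ^ χ i * v i

/-- Coordinatewise powers of a point of the sphere. -/
def powVec (m : ℕ) (d : Fin m → ℕ) (z : Sph m) : Fin m → ℂ :=
  fun i => (z : Fin m → ℂ) i ^ d i

/-- `IsEMap m χ ω e` says that `e` is the canonical map `e(χ/ω) : P(ω) → P(χ)`:
it is continuous and sends `[z]_ω` to `[N_χ(z_0^{d_0}, …, z_n^{d_n})]_χ`. -/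
def IsEMap (m : ℕ) (χ ω : Fin m → ℕ) (e : WP m ω → WP m χ) : Prop :=
  Continuous e ∧ ∀ z w : Sph m,
    IsNorm m χ (powVec m (dExp m χ ω) z) w → e (wpMk m ω z) = wpMk m χ w

/-- The relation on the sphere whose quotient is the weighted lens space `L(k;χ)`. -/
def lensRel (m k : ℕ) (χ : Fin m → ℕ) (z w : Sph m) : Prop :=
  ∃ ζ : ℂ, ζ ^ k = 1 ∧ ∀ i, (w : Fin m → ℂ) i = ζ ^ χ i * (z : Fin m → ℂ) i

/-- The weighted lens space `L(k;χ)`, with the quotient topology. -/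
abbrev Lens (m k : ℕ) (χ : Fin m → ℕ) : Type := Quot (lensRel m k χ)

/-!
Rotating `z` by a `χ_n`-th root of `|z_n| / z_n` makes `z_n` real and positive, and the only
remaining freedom is `μ_{χ_n}`. Such a point is `(t/√2 · u, √(1 - t²/2))` with `t ∈ [0,1]`
determined by `|z_n|` and `u ∈ S^{2n-1}` determined up to `μ_{χ_n}` when `t ≠ 0`, so
`(u, t) ↦ [t/√2 · u, √(1 - t²/2)]` is a continuous bijection from the cone on `L(χ_n;χ')`
onto `C`. The cone is compact, and `C` is Hausdorff because `P(χ)` is the orbit space of a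
compact group acting on a compact space, so this bijection is a homeomorphism.
-/

abbrev Cone (X : Type*) : Type _ :=
  Quot (fun a b : X × unitInterval => (a.2 : ℝ) = 0 ∧ (b.2 : ℝ) = 0)

theorem Cone.nonempty_homeomorph {X Y : Type*} [TopologicalSpace X] [CompactSpace X]
    [TopologicalSpace Y] [T2Space Y] (f : X × unitInterval → Y) (hf : Continuous f)
    (hsurj : Function.Surjective f)
    (hf_eq : ∀ p q, f p = f q ↔ p = q ∨ ((p.2 : ℝ) = 0 ∧ (q.2 : ℝ) = 0)) :
    Nonempty (Cone X ≃ₜ Y) := by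
  let g : Cone X → Y := Quot.lift f fun p q h => (hf_eq p q).2 (Or.inr h)
  have hg : Function.Bijective g := by
    refine ⟨fun a b hab => ?_, fun y => ?_⟩
    · induction a using Quot.ind with | _ p =>
      induction b using Quot.ind with | _ q =>
      rcases (hf_eq p q).1 hab with rfl | h
      · rfl
      · exact Quot.sound h
    · obtain ⟨p, rfl⟩ := hsurj y
      exact ⟨Quot.mk _ p, rfl⟩
  exact ⟨(continuous_quot_lift _ hf).homeoOfEquivCompactToT2 (f := Equiv.ofBijective g hg)⟩

section Sphere

variable {m : ℕ}

lemma sph_norm_sq_le_one (z : Sph m) (i : Fin m) : ‖z.1 i‖ ^ 2 ≤ 1 := by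
  simpa [z.2] using Finset.single_le_sum (f := fun j => ‖z.1 j‖ ^ 2) (fun _ _ => sq_nonneg _)
    (Finset.mem_univ i)

instance (m : ℕ) : CompactSpace (Sph m) := by
  refine isCompact_iff_compactSpace.mp (Metric.isCompact_of_isClosed_isBounded
    (isClosed_eq (by fun_prop) continuous_const) ((Metric.isBounded_closedBall (x := 0)
      (r := 1)).subset fun z hz => ?_))
  rw [mem_closedBall_zero_iff, pi_norm_le_iff_of_nonneg zero_le_one]
  exact fun i => (sq_le_one_iff₀ (norm_nonneg _)).mp (sph_norm_sq_le_one ⟨z, hz⟩ i)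

lemma exists_eq_norm_mul_sph (hm : 0 < m) (v : Fin m → ℂ) :
    ∃ u : Sph m, ∀ i, v i = (√(∑ j, ‖v j‖ ^ 2) : ℂ) * u.1 i := by
  set ρ := √(∑ j, ‖v j‖ ^ 2)
  have hρ : ρ ^ 2 = ∑ j, ‖v j‖ ^ 2 := Real.sq_sqrt (by positivity)
  by_cases hρ0 : ρ = 0
  · refine ⟨⟨Pi.single ⟨0, hm⟩ 1, ?_⟩, fun i => ?_⟩
    · rw [Finset.sum_eq_single ⟨0, hm⟩ (fun j _ hj => by simp [hj]) (by simp)]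
      simp
    · have hv : ∀ j ∈ Finset.univ, ‖v j‖ ^ 2 = 0 :=
        (Finset.sum_eq_zero_iff_of_nonneg fun _ _ => sq_nonneg _).mp (by rw [← hρ, hρ0]; ring)
      simpa [hρ0] using hv i (Finset.mem_univ i)
  · refine ⟨⟨fun i => v i / ρ, ?_⟩, fun i => ?_⟩
    · simp_rw [norm_div, Complex.norm_real, Real.norm_eq_abs, div_pow, sq_abs, ← Finset.sum_div,
        ← hρ, div_self (pow_ne_zero 2 hρ0)]
    · rw [mul_div_cancel₀ _ (Complex.ofReal_ne_zero.mpr hρ0)]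

end Sphere

section WeightedProjectiveSpace

variable {m : ℕ}

@[reducible]
def weightedAction (χ : Fin m → ℕ) : MulAction Circle (Sph m) where
  smul t z := ⟨fun i => (t : ℂ) ^ χ i * z.1 i, by simp [Circle.norm_coe, z.2]⟩
  one_smul z := Subtype.ext <| funext fun i =>
    show ((1 : Circle) : ℂ) ^ χ i * z.1 i = z.1 i by rw [Circle.coe_one, one_pow, one_mul]
  mul_smul s t z := Subtype.ext <| funext fun i =>
    show ((s * t : Circle) : ℂ) ^ χ i * z.1 i = (s : ℂ) ^ χ i * ((t : ℂ) ^ χ i * z.1 i) by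
      rw [Circle.coe_mul, mul_pow, mul_assoc]

lemma wRel_iff_exists_smul (χ : Fin m → ℕ) (z w : Sph m) :
    wRel m χ z w ↔ ∃ t : Circle, (weightedAction χ).smul t z = w := by
  constructor
  · rintro ⟨t, ht, h⟩
    exact ⟨⟨t, mem_sphere_zero_iff_norm.2 ht⟩, Subtype.ext (funext fun i => (h i).symm)⟩
  · rintro ⟨t, rfl⟩
    exact ⟨t, Circle.norm_coe t, fun i => rfl⟩

lemma wRel_eq_orbitRel (χ : Fin m → ℕ) :
    wRel m χ = (letI := weightedAction χ; MulAction.orbitRel Circle (Sph m)).r := by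
  let _ := weightedAction χ
  ext z w
  rw [wRel_iff_exists_smul, Setoid.comm' (MulAction.orbitRel Circle (Sph m))]
  rfl

lemma wRel_equivalence (χ : Fin m → ℕ) : Equivalence (wRel m χ) :=
  letI := weightedAction χ
  wRel_eq_orbitRel χ ▸ (MulAction.orbitRel Circle (Sph m)).iseqv

lemma wpMk_eq_iff {χ : Fin m → ℕ} {z w : Sph m} :
    wpMk m χ z = wpMk m χ w ↔ wRel m χ z w := by
  rw [wpMk, wpMk, Quot.eq, (wRel_equivalence χ).eqvGen_iff]

lemma norm_eq_of_wpMk_eq {χ : Fin m → ℕ} {z w : Sph m} (h : wpMk m χ z = wpMk m χ w)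
    (i : Fin m) : ‖z.1 i‖ = ‖w.1 i‖ := by
  obtain ⟨t, ht, hw⟩ := wpMk_eq_iff.mp h
  rw [hw i, norm_mul, norm_pow, ht, one_pow, one_mul]

-- A continuous action of a compact group is proper, so its orbit space is Hausdorff.
instance (χ : Fin m → ℕ) : T2Space (WP m χ) := by
  let _ := weightedAction χ
  have : ContinuousSMul Circle (Sph m) :=
    ⟨(continuous_pi fun i =>
      ((continuous_subtype_val.comp continuous_fst).pow _).mul
        ((continuous_apply i).comp (continuous_subtype_val.comp continuous_snd))).subtype_mk _⟩
  have : ProperSMul Circle (Sph m) := (properSMul_iff _ _).2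
    (by fun_prop : Continuous fun gx : Circle × Sph m => (gx.1 • gx.2, gx.2)).isProperMap
  show T2Space (Quot (wRel m χ))
  rw [wRel_eq_orbitRel]
  exact t2Space_quotient_mulAction_of_properSMul

end WeightedProjectiveSpace

section ConeCoordinates

variable {n : ℕ}

-- `t = √2 ‖z'‖`: `t = 0` is the apex `[0, …, 0, 1]`, `t = 1` the boundary `|z_n|² = 1/2`.
def coneVec (u : Sph n) (t : unitInterval) : Sph (n + 1) :=
  ⟨Fin.snoc (fun j => ((t / √2 : ℝ) : ℂ) * u.1 j) ((√(1 - t ^ 2 / 2) : ℝ) : ℂ), by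
    have ht : (t : ℝ) ^ 2 ≤ 1 := pow_le_one₀ t.2.1 t.2.2
    simp only [Fin.sum_univ_castSucc, Fin.snoc_castSucc, Fin.snoc_last, norm_mul,
      Complex.norm_real, Real.norm_eq_abs, mul_pow, sq_abs, ← Finset.mul_sum, u.2, div_pow,
      Real.sq_sqrt zero_le_two, Real.sq_sqrt (show 0 ≤ 1 - (t : ℝ) ^ 2 / 2 by linarith)]
    ring⟩

@[simp]
lemma coneVec_castSucc (u : Sph n) (t : unitInterval) (j : Fin n) :
    (coneVec u t).1 j.castSucc = ((t / √2 : ℝ) : ℂ) * u.1 j := by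
  simp only [coneVec, Fin.snoc_castSucc]

@[simp]
lemma coneVec_last (u : Sph n) (t : unitInterval) :
    (coneVec u t).1 (Fin.last n) = ((√(1 - t ^ 2 / 2) : ℝ) : ℂ) := by
  simp only [coneVec, Fin.snoc_last]

lemma norm_coneVec_last_sq (u : Sph n) (t : unitInterval) :
    ‖(coneVec u t).1 (Fin.last n)‖ ^ 2 = 1 - t ^ 2 / 2 := by
  have ht : (t : ℝ) ^ 2 ≤ 1 := pow_le_one₀ t.2.1 t.2.2
  rw [coneVec_last, Complex.norm_real, Real.norm_eq_abs, sq_abs, Real.sq_sqrt (by linarith)]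

lemma continuous_coneVec : Continuous fun p : Sph n × unitInterval => coneVec p.1 p.2 := by
  refine Continuous.subtype_mk (continuous_pi fun i => ?_) _
  refine Fin.lastCases ?_ (fun j => ?_) i
  · simp only [Fin.snoc_last]
    fun_prop
  · simp only [Fin.snoc_castSucc]
    exact (Complex.continuous_ofReal.comp (by fun_prop)).mul
      ((continuous_apply j).comp (continuous_subtype_val.comp continuous_fst))

lemma coneVec_eq_of_eq_zero (u v : Sph n) {t s : unitInterval} (ht : (t : ℝ) = 0)
    (hs : (s : ℝ) = 0) : coneVec u t = coneVec v s := by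
  refine Subtype.ext (funext fun i => Fin.lastCases ?_ (fun j => ?_) i) <;> simp [ht, hs]

end ConeCoordinates

section WeightedCone

variable {n : ℕ} (χ : Fin (n + 1) → ℕ)

lemma wRel_coneVec_of_lensRel (hk : 0 < χ (Fin.last n)) {u v : Sph n} (t : unitInterval)
    (h : lensRel n (χ (Fin.last n)) (fun i => χ i.castSucc) u v) :
    wRel (n + 1) χ (coneVec u t) (coneVec v t) := by
  obtain ⟨ζ, hζ, huv⟩ := h
  refine ⟨ζ, Complex.norm_eq_one_of_pow_eq_one hζ hk.ne',
    fun i => Fin.lastCases ?_ (fun j => ?_) i⟩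
  · simp [hζ]
  · simp only [coneVec_castSucc, huv j]
    ring

variable {χ} in
lemma eq_and_lensRel_of_wRel_coneVec {u v : Sph n} {t s : unitInterval}
    (h : wRel (n + 1) χ (coneVec u t) (coneVec v s)) :
    t = s ∧ ((t : ℝ) = 0 ∨ lensRel n (χ (Fin.last n)) (fun i => χ i.castSucc) u v) := by
  have hts : t = s := by
    have hnorm := congrArg (· ^ 2) (norm_eq_of_wpMk_eq (wpMk_eq_iff.2 h) (Fin.last n))
    simp only [norm_coneVec_last_sq] at hnorm
    exact Subtype.ext ((sq_eq_sq₀ t.2.1 s.2.1).1 (by linarith))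
  subst hts
  obtain ⟨τ, -, hc⟩ := h
  refine ⟨rfl, or_iff_not_imp_left.2 fun ht => ⟨τ, ?_, fun j => ?_⟩⟩
  · have hlast := hc (Fin.last n)
    have ha : ((√(1 - t ^ 2 / 2) : ℝ) : ℂ) ≠ 0 := by
      have : (t : ℝ) ^ 2 ≤ 1 := pow_le_one₀ t.2.1 t.2.2
      exact Complex.ofReal_ne_zero.2 (Real.sqrt_ne_zero'.2 (by linarith))
    rw [coneVec_last, coneVec_last] at hlast
    exact (mul_eq_right₀ ha).1 hlast.symm
  · have hj := hc j.castSucc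
    rw [coneVec_castSucc, coneVec_castSucc, mul_left_comm] at hj
    have ht' : ((t / √2 : ℝ) : ℂ) ≠ 0 := by simpa using ht
    exact mul_left_cancel₀ ht' hj

lemma exists_wRel_coneVec (hn : 0 < n) (hk : 0 < χ (Fin.last n)) (z : Sph (n + 1))
    (hz : 1 / 2 ≤ ‖z.1 (Fin.last n)‖ ^ 2) : ∃ u t, wRel (n + 1) χ z (coneVec u t) := by
  set r := ‖z.1 (Fin.last n)‖
  have hr : 0 < r := by
    by_contra! h
    nlinarith [norm_nonneg (z.1 (Fin.last n))]
  have hzn : z.1 (Fin.last n) ≠ 0 := norm_pos_iff.1 hr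
  obtain ⟨τ, hτ⟩ := IsAlgClosed.exists_pow_nat_eq ((r : ℂ) / z.1 (Fin.last n)) hk
  have hτ1 : ‖τ‖ = 1 := by
    refine (pow_eq_one_iff_of_nonneg (norm_nonneg τ) hk.ne').1 ?_
    rw [← norm_pow, hτ, norm_div, Complex.norm_real, Real.norm_of_nonneg hr.le, div_self hr.ne']
  set v : Fin n → ℂ := fun j => τ ^ χ j.castSucc * z.1 j.castSucc
  have hv : ∑ j, ‖v j‖ ^ 2 = 1 - r ^ 2 := by
    have hz1 := z.2
    rw [Fin.sum_univ_castSucc] at hz1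
    simp only [v, norm_mul, norm_pow, hτ1, one_pow, one_mul]
    linarith
  obtain ⟨u, hu⟩ := exists_eq_norm_mul_sph hn v
  rw [hv] at hu
  set ρ := √(1 - r ^ 2)
  have hρ : ρ ^ 2 = 1 - r ^ 2 := Real.sq_sqrt (by nlinarith [sph_norm_sq_le_one z (Fin.last n)])
  have ht : √2 * ρ ∈ unitInterval := by
    refine ⟨by positivity, (sq_le_one_iff₀ (by positivity)).1 ?_⟩
    rw [mul_pow, Real.sq_sqrt zero_le_two, hρ]
    linarith
  refine ⟨u, ⟨_, ht⟩, τ, hτ1, fun i => Fin.lastCases ?_ (fun j => ?_) i⟩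
  · rw [coneVec_last, hτ, div_mul_cancel₀ _ hzn, mul_pow, Real.sq_sqrt zero_le_two, hρ]
    congr 1
    rw [show 1 - 2 * (1 - r ^ 2) / 2 = r ^ 2 by ring, Real.sqrt_sq hr.le]
  · rw [coneVec_castSucc, mul_div_cancel_left₀ _ (Real.sqrt_ne_zero'.2 zero_lt_two)]
    exact (hu j).symm

abbrev UpperCap : Type := {x : WP (n + 1) χ // ∃ z : Sph (n + 1), wpMk (n + 1) χ z = x ∧
  1 / 2 ≤ ‖(z : Fin (n + 1) → ℂ) (Fin.last n)‖ ^ 2}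

def coneToCap (hk : 0 < χ (Fin.last n)) :
    Lens n (χ (Fin.last n)) (fun i => χ i.castSucc) × unitInterval → UpperCap χ := fun p =>
  Quot.lift (fun u => ⟨wpMk (n + 1) χ (coneVec u p.2), coneVec u p.2, rfl, by
      have : (p.2 : ℝ) ^ 2 ≤ 1 := pow_le_one₀ p.2.2.1 p.2.2.2
      rw [norm_coneVec_last_sq]
      linarith⟩)
    (fun _ _ h => Subtype.ext (Quot.sound (wRel_coneVec_of_lensRel χ hk p.2 h))) p.1

lemma continuous_coneToCap (hk : 0 < χ (Fin.last n)) : Continuous (coneToCap χ hk) :=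
  isQuotientMap_quot_mk.continuous_lift_prod_left <|
    (continuous_quot_mk.comp continuous_coneVec).subtype_mk _

lemma coneToCap_surjective (hn : 0 < n) (hk : 0 < χ (Fin.last n)) :
    Function.Surjective (coneToCap χ hk) := by
  rintro ⟨_, z, rfl, hz⟩
  obtain ⟨u, t, h⟩ := exists_wRel_coneVec χ hn hk z hz
  exact ⟨(Quot.mk _ u, t), Subtype.ext (Quot.sound h).symm⟩

lemma coneToCap_eq_iff (hk : 0 < χ (Fin.last n)) (p q) :
    coneToCap χ hk p = coneToCap χ hk q ↔ p = q ∨ ((p.2 : ℝ) = 0 ∧ (q.2 : ℝ) = 0) := by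
  obtain ⟨a, t⟩ := p
  obtain ⟨b, s⟩ := q
  induction a using Quot.ind with | _ u =>
  induction b using Quot.ind with | _ v =>
  constructor
  · intro h
    obtain ⟨rfl, ht | huv⟩ :=
      eq_and_lensRel_of_wRel_coneVec (wpMk_eq_iff.1 (congrArg Subtype.val h))
    · exact Or.inr ⟨ht, ht⟩
    · exact Or.inl (by rw [Quot.sound huv])
  · rintro (h | ⟨ht, hs⟩)
    · rw [h]
    · exact Subtype.ext (congrArg (wpMk (n + 1) χ) (coneVec_eq_of_eq_zero u v ht hs))

end WeightedCone

/-- The condition `|z_n|² ≥ 1/2` is independent of the representative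
`z ∈ S^{2n+1}` of a class in `P(χ)`, and the subspace `C = {[z]_χ : |z_n|² ≥ 1/2}` of
`P(χ)` is homeomorphic to the cone on the weighted lens space `L(χ_n; χ')`, i.e. to
`(L(χ_n;χ') × [0,1]) / (L(χ_n;χ') × {0})`. -/
theorem statement16 (n : ℕ) (hn : 1 ≤ n) (χ : Fin (n + 1) → ℕ) (hχ : ∀ i, 1 ≤ χ i) :
    (∀ z w : Sph (n + 1), wpMk (n + 1) χ z = wpMk (n + 1) χ w →
      (1 / 2 ≤ ‖(z : Fin (n + 1) → ℂ) (Fin.last n)‖ ^ 2 ↔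
        1 / 2 ≤ ‖(w : Fin (n + 1) → ℂ) (Fin.last n)‖ ^ 2)) ∧
    Nonempty (
      {x : WP (n + 1) χ // ∃ z : Sph (n + 1), wpMk (n + 1) χ z = x ∧
        1 / 2 ≤ ‖(z : Fin (n + 1) → ℂ) (Fin.last n)‖ ^ 2} ≃ₜ
      Quot (fun a b : Lens n (χ (Fin.last n)) (fun i => χ i.castSucc) ×
          {s : ℝ // s ∈ Set.Icc (0 : ℝ) 1} =>
        (a.2 : ℝ) = 0 ∧ (b.2 : ℝ) = 0)) := by
  refine ⟨fun z w h => by rw [norm_eq_of_wpMk_eq h], ?_⟩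
  have hk : 0 < χ (Fin.last n) := hχ _
  exact (Cone.nonempty_homeomorph (coneToCap χ hk) (continuous_coneToCap χ hk)
    (coneToCap_surjective χ hn hk) (coneToCap_eq_iff χ hk)).map Homeomorph.symm
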